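/- arXiv:1009.4430 — 4 statements merged into one kernel-verified Lean document; each statement's English description precedes it below -/
import Mathlib

section
/- Let n be a positive integer and let f be a continuous strictly increasing function on [0,1] with f(0) = 0, f(1) = 1, such that f is differentiable at 0 with f'(0) > (1/2)·9^n. Then there exist numbers 0 < u_n < v_n < u_{n−1} < v_{n−1} < … < u_1 < v_1 ≤ 1 such that f(u_i) = 3·9^{i−1} u_i and f(v_i) = 9^{i−1} v_i for every i = 1,…,n. -/
/-! The targets `9^(i-1)` and `3·9^(i-1)` are the powers `3^k`, `k = 0, …, 2n-1`, alternating
between `v` and `u`. Starting from `v_1 = 1`, where `f(x)/x = 1 = 3^0`, each further point is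
found to the left of the previous one by the intermediate value theorem for `f(x)/x`: at the
previous point this ratio equals `3^k < 3^(k+1)`, while near `0` it tends to
`f'(0) > 9^n/2 > 3^(2n-1)`. -/

open Set Filter Topology

lemma tendsto_div_nhdsGT_zero_of_hasDerivWithinAt {f : ℝ → ℝ} {d : ℝ} (hf0 : f 0 = 0)
    (hd : HasDerivWithinAt f d (Ioi 0) 0) :
    Tendsto (fun x => f x / x) (𝓝[>] 0) (𝓝 d) := by
  have h := hasDerivWithinAt_iff_tendsto_slope.mp hd
  rw [sdiff_singleton_eq_self (by simp)] at h
  refine h.congr fun x => ?_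
  simp [slope, hf0, div_eq_inv_mul]

lemma exists_mem_Ioo_eq_mul_of_tendsto_div {f : ℝ → ℝ} {a c d : ℝ} (ha : 0 < a)
    (hf : ContinuousOn f (Ioc 0 a)) (hd : Tendsto (fun x => f x / x) (𝓝[>] 0) (𝓝 d))
    (hfa : f a < c * a) (hcd : c < d) : ∃ b ∈ Ioo 0 a, f b = c * b := by
  obtain ⟨x, hcx, hx⟩ :=
    ((hd.eventually (eventually_gt_nhds hcd)).and (Ioo_mem_nhdsGT ha)).exists
  have hratio : ContinuousOn (fun z => f z / z) (Icc x a) :=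
    (hf.mono (Icc_subset_Ioc hx.1 le_rfl)).div continuousOn_id fun z hz =>
      (hx.1.trans_le hz.1).ne'
  obtain ⟨b, hb, hbc⟩ :=
    intermediate_value_Ioo' hx.2.le hratio ⟨(div_lt_iff₀ ha).mpr hfa, hcx⟩
  have hb0 : 0 < b := hx.1.trans hb.1
  exact ⟨b, ⟨hb0, hb.2⟩, by simpa [div_eq_iff hb0.ne'] using hbc⟩

lemma exists_strictAntiOn_chain {α : Type*} [Preorder α] (Q : ℕ → α → Prop) {x₀ : α}
    (h₀ : Q 0 x₀) (m : ℕ) (hstep : ∀ k < m, ∀ x, Q k x → ∃ y < x, Q (k + 1) y) :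
    ∃ w : ℕ → α, w 0 = x₀ ∧ (∀ k ≤ m, Q k (w k)) ∧ StrictAntiOn w (Iic m) := by
  suffices ∃ w : ℕ → α, w 0 = x₀ ∧ (∀ k ≤ m, Q k (w k)) ∧ ∀ k < m, w (k + 1) < w k by
    obtain ⟨w, hw0, hQ, hsucc⟩ := this
    exact ⟨w, hw0, hQ, strictAntiOn_Iic_of_succ_lt hsucc⟩
  induction m with
  | zero => exact ⟨fun _ => x₀, rfl, fun k hk => by rwa [Nat.le_zero.mp hk], by simp⟩
  | succ m ih =>
    obtain ⟨w, hw0, hQ, hsucc⟩ := ih fun k hk => hstep k (hk.trans m.lt_succ_self)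
    obtain ⟨y, hy, hQy⟩ := hstep m m.lt_succ_self (w m) (hQ m le_rfl)
    refine ⟨Function.update w (m + 1) y, by simp [hw0], fun k hk => ?_, fun k hk => ?_⟩
    · rcases (Nat.le_succ_iff.mp hk) with hk | rfl
      · simpa [Function.update_of_ne (by omega : k ≠ m + 1)] using hQ k hk
      · simpa using hQy
    · rcases (Nat.lt_succ_iff_lt_or_eq.mp hk) with hk | rfl
      · simpa [Function.update_of_ne (by omega : k ≠ m + 1),
          Function.update_of_ne (by omega : k + 1 ≠ m + 1)] using hsucc k hk
      · simpa using hy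

lemma three_pow_lt_half_nine_pow {k n : ℕ} (hk : k < 2 * n) : (3 : ℝ) ^ k < 1 / 2 * 9 ^ n := by
  have hle : (3 : ℝ) ^ (k + 1) ≤ 9 ^ n := by
    rw [show (9 : ℝ) = 3 ^ 2 by norm_num, ← pow_mul]
    exact pow_le_pow_right₀ (by norm_num) hk
  have : (0 : ℝ) < 3 ^ k := by positivity
  rw [pow_succ] at hle
  linarith

theorem exists_uv_chain_general (n : ℕ) (hn : 0 < n) (f : ℝ → ℝ)
    (hcont : ContinuousOn f (Set.Icc (0:ℝ) 1))
    (hf0 : f 0 = 0) (hf1 : f 1 = 1)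
    (d : ℝ) (hd : HasDerivWithinAt f d (Set.Icc (0:ℝ) 1) 0)
    (hd' : (1/2 : ℝ) * 9 ^ n < d) :
    ∃ u v : Fin n → ℝ,
      (∀ i, 0 < u i) ∧ (∀ i, u i < v i) ∧ (∀ i j : Fin n, i < j → v j < u i) ∧
      v ⟨0, hn⟩ ≤ 1 ∧
      (∀ i, f (u i) = 3 * 9 ^ (i : ℕ) * u i) ∧
      (∀ i, f (v i) = 9 ^ (i : ℕ) * v i) := by
  have hslope := tendsto_div_nhdsGT_zero_of_hasDerivWithinAt hf0
    (hd.mono_of_mem_nhdsWithin (Icc_mem_nhdsGT zero_lt_one))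
  have hstep : ∀ k < 2 * n - 1, ∀ x, x ∈ Ioc 0 1 ∧ f x = 3 ^ k * x →
      ∃ y < x, y ∈ Ioc 0 1 ∧ f y = 3 ^ (k + 1) * y := by
    rintro k hk x ⟨hx, hfx⟩
    obtain ⟨y, hy, hfy⟩ := exists_mem_Ioo_eq_mul_of_tendsto_div (c := 3 ^ (k + 1)) hx.1
      (hcont.mono (Ioc_subset_Icc_self.trans (Icc_subset_Icc le_rfl hx.2))) hslope
      (by rw [hfx]; gcongr <;> norm_num [hx.1])
      ((three_pow_lt_half_nine_pow (by omega)).trans hd')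
    exact ⟨y, hy.2, ⟨hy.1, hy.2.le.trans hx.2⟩, hfy⟩
  obtain ⟨w, hw0, hw, hanti⟩ := exists_strictAntiOn_chain
    (fun k x => x ∈ Ioc 0 1 ∧ f x = 3 ^ k * x) (x₀ := 1) (by simp [hf1]) (2 * n - 1) hstep
  have hmem (k : ℕ) (i : Fin n) (hk : k ≤ 2 * i + 1) : k ∈ Iic (2 * n - 1) := by
    have := i.isLt; simp only [mem_Iic]; omega
  refine ⟨fun i => w (2 * i + 1), fun i => w (2 * i), fun i => (hw _ (hmem _ i le_rfl)).1.1,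
    fun i => hanti (hmem (2 * i) i (by omega)) (hmem _ i le_rfl) (by omega),
    fun i j hij => hanti (hmem _ i le_rfl) (hmem (2 * j) j (by omega)) (by omega),
    by simp [hw0], fun i => ?_, fun i => ?_⟩
  · rw [(hw _ (hmem _ i le_rfl)).2, pow_succ, pow_mul]; ring
  · rw [(hw _ (hmem (2 * i) i (by omega))).2, pow_mul]; norm_num

/-- First step in the proof of Lemma 2: if `f` is continuous and strictly increasing on
`[0,1]`, `f 0 = 0`, `f 1 = 1`, and `f` is differentiable at `0` (from within `[0,1]`)
with derivative `d > (1/2)·9^n`, then there exist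
`0 < u_n < v_n < u_{n-1} < v_{n-1} < … < u_1 < v_1 ≤ 1` with `f(u_i) = 3·9^(i-1) u_i`
and `f(v_i) = 9^(i-1) v_i` for every `i`.
(Here index `i : Fin n` corresponds to the paper's index `i + 1`.) -/
theorem exists_uv_chain (n : ℕ) (hn : 0 < n) (f : ℝ → ℝ)
    (hcont : ContinuousOn f (Set.Icc (0:ℝ) 1))
    (hmono : StrictMonoOn f (Set.Icc (0:ℝ) 1))
    (hf0 : f 0 = 0) (hf1 : f 1 = 1)
    (d : ℝ) (hd : HasDerivWithinAt f d (Set.Icc (0:ℝ) 1) 0)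
    (hd' : (1/2 : ℝ) * 9 ^ n < d) :
    ∃ u v : Fin n → ℝ,
      (∀ i, 0 < u i) ∧ (∀ i, u i < v i) ∧ (∀ i j : Fin n, i < j → v j < u i) ∧
      v ⟨0, hn⟩ ≤ 1 ∧
      (∀ i, f (u i) = 3 * 9 ^ (i : ℕ) * u i) ∧
      (∀ i, f (v i) = 9 ^ (i : ℕ) * v i) :=
  exists_uv_chain_general n hn f hcont hf0 hf1 d hd hd'
end

section
/- Let f be a strictly increasing function on [0,1] and let n be a positive integer. Suppose 0 < u_n < v_n < u_{n−1} < v_{n−1} < … < u_1 < v_1 ≤ 1 are numbers with f(u_i) = 3·9^{i−1} u_i and f(v_i) = 9^{i−1} v_i for every i = 1,…,n. Then v_i < 3·9^{k−i} u_k whenever 1 ≤ k < i ≤ n. -/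
/-! Since `v_i < u_k` and both lie in `(0, 1]`, monotonicity of `f` gives
`9^(i-1) v_i = f(v_i) < f(u_k) = 3·9^(k-1) u_k`. -/

lemma lt_div_mul_of_strictMonoOn {f : ℝ → ℝ} {s : Set ℝ} (hf : StrictMonoOn f s)
    {x y a b : ℝ} (hx : x ∈ s) (hy : y ∈ s) (hxy : x < y) (ha : 0 < a)
    (hfx : f x = a * x) (hfy : f y = b * y) : x < b / a * y := by
  have h := hf hx hy hxy
  rw [hfx, hfy] at h
  rw [div_mul_eq_mul_div, lt_div_iff₀ ha]
  linarith

lemma le_head_of_interlaced {n : ℕ} (hn : 0 < n) {u v : Fin n → ℝ} (huv : ∀ i, u i < v i)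
    (hvu : ∀ i j : Fin n, i < j → v j < u i) (j : Fin n) : v j ≤ v ⟨0, hn⟩ := by
  rcases Nat.eq_zero_or_pos j with h | h
  · rw [show j = ⟨0, hn⟩ from Fin.ext h]
  · exact ((hvu ⟨0, hn⟩ j (Fin.lt_def.mpr h)).trans (huv _)).le

/-- Inequality (10) in the proof of Lemma 2: if `f` is strictly increasing on `[0,1]` and
`0 < u_n < v_n < … < u_1 < v_1 ≤ 1` satisfy `f(u_i) = 3·9^(i-1) u_i` and
`f(v_i) = 9^(i-1) v_i`, then `v_i < 3·9^(k-i) u_k` whenever `k < i`.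
(Here index `i : Fin n` corresponds to the paper's index `i + 1`.) -/
theorem v_lt_u_estimate (n : ℕ) (hn : 0 < n) (f : ℝ → ℝ)
    (hmono : StrictMonoOn f (Set.Icc (0:ℝ) 1))
    (u v : Fin n → ℝ)
    (hu : ∀ i, 0 < u i) (huv : ∀ i, u i < v i)
    (hvu : ∀ i j : Fin n, i < j → v j < u i) (hv1 : v ⟨0, hn⟩ ≤ 1)
    (hfu : ∀ i, f (u i) = 3 * 9 ^ (i : ℕ) * u i)
    (hfv : ∀ i, f (v i) = 9 ^ (i : ℕ) * v i) :
    ∀ k i : Fin n, k < i → v i < 3 * (9:ℝ) ^ ((k : ℤ) - (i : ℤ)) * u k := by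
  intro k i hki
  have hv_le_one j : v j ≤ 1 := (le_head_of_interlaced hn huv hvu j).trans hv1
  have hv_mem j : v j ∈ Set.Icc (0:ℝ) 1 := ⟨(hu j).le.trans (huv j).le, hv_le_one j⟩
  have hu_mem j : u j ∈ Set.Icc (0:ℝ) 1 := ⟨(hu j).le, (huv j).le.trans (hv_le_one j)⟩
  have hcoeff : (3 : ℝ) * 9 ^ (k : ℕ) / 9 ^ (i : ℕ) = 3 * 9 ^ ((k : ℤ) - (i : ℤ)) := by
    rw [zpow_sub₀ (by norm_num), zpow_natCast, zpow_natCast, mul_div_assoc]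
  rw [← hcoeff]
  exact lt_div_mul_of_strictMonoOn hmono (hv_mem i) (hu_mem k) (hvu k i hki) (by positivity)
    (hfv i) (hfu k)
end

section
/- Let n be a positive integer, let 0 < z_n < z_{n−1} < … < z_1 be real numbers, and let s ∈ {1,…,n}. Then Σ_{k=1}^{n} 4·9^{k−1} · z_k² (z_k² − 3 z_s²) / (z_k² + 3 z_s²)² < 0. -/
/-!
With `x = z_k²` and `y = z_s²`, each summand is a weight `4·9^k` times `x (x - 3y) / (x + 3y)²`.
That factor is at most `1` for every `k`, equals `-1/8` at `k = s`, and is nonpositive for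
`k > s` because then `z_k² < z_s² ≤ 3 z_s²`. The negative term `-9^s/2` at `k = s` outweighs the
terms with `k < s`, whose sum is less than `4 (1 + 9 + ⋯ + 9^(s-1)) = (9^s - 1)/2`.
-/

open Finset

namespace DerivSumNeg

/-- With `y = t²` this is the derivative at `t` of `t ↦ x t / (x + 3 t²)`. -/
noncomputable def ratio (x y : ℝ) : ℝ := x * (x - 3 * y) / (x + 3 * y) ^ 2

theorem ratio_le_one {x y : ℝ} (hx : 0 ≤ x) (hy : 0 ≤ y) : ratio x y ≤ 1 := by
  rcases (add_nonneg hx (mul_nonneg zero_le_three hy)).eq_or_lt with hden | hden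
  · simp [ratio, ← hden]
  · rw [ratio, div_le_one (by positivity)]
    nlinarith [mul_nonneg hx hy, sq_nonneg y]

theorem ratio_self {y : ℝ} (hy : y ≠ 0) : ratio y y = -1 / 8 := by
  rw [ratio]
  field_simp
  ring

theorem ratio_nonpos {x y : ℝ} (hx : 0 ≤ x) (hxy : x ≤ 3 * y) : ratio x y ≤ 0 :=
  div_nonpos_of_nonpos_of_nonneg (mul_nonpos_of_nonneg_of_nonpos hx (by linarith)) (sq_nonneg _)

theorem sum_mul_neg_of_dominant {ι : Type*} [Fintype ι] [LinearOrder ι] {w f : ι → ℝ} {s : ι}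
    {c : ℝ} (hw : ∀ k, 0 ≤ w k) (hdom : ∑ k with k < s, w k < c * w s)
    (hlt : ∀ k < s, f k ≤ 1) (hs : f s ≤ -c) (hgt : ∀ k, s < k → f k ≤ 0) :
    ∑ k, w k * f k < 0 := by
  rw [← sum_filter_add_sum_filter_not univ (· < s)]
  have below : ∑ k with k < s, w k * f k ≤ ∑ k with k < s, w k :=
    sum_le_sum fun k hk => mul_le_of_le_one_right (hw k) (hlt k (mem_filter.mp hk).2)
  have above : ∑ k ∈ (univ.filter (¬ · < s)).erase s, w k * f k ≤ 0 :=
    sum_nonpos fun k hk => mul_nonpos_of_nonneg_of_nonpos (hw k) <| hgt k <| by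
      simp only [mem_erase, mem_filter, mem_univ, true_and, not_lt] at hk
      exact lt_of_le_of_ne hk.2 (Ne.symm hk.1)
  rw [← add_sum_erase _ _ (by simp : s ∈ univ.filter (¬ · < s))]
  nlinarith [hw s]

theorem four_mul_sum_nine_pow_lt (m : ℕ) : ∑ i ∈ range m, 4 * (9 : ℝ) ^ i < 9 ^ m / 2 := by
  have hgeom : ∑ i ∈ range m, (9 : ℝ) ^ i = (9 ^ m - 1) / 8 := by
    rw [geom_sum_eq (by norm_num)]
    norm_num
  rw [← mul_sum, hgeom]
  linarith

theorem Fin.sum_filter_lt_eq_sum_range {M : Type*} [AddCommMonoid M] {n : ℕ} (s : Fin n)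
    (g : ℕ → M) :
    ∑ k : Fin n with k < s, g k = ∑ i ∈ range s, g i := by
  rw [filter_gt_eq_Iio, ← Nat.Iio_eq_range, ← Fin.map_valEmbedding_Iio, sum_map]
  rfl

end DerivSumNeg

open DerivSumNeg in
/-- Index `k : Fin n` is the paper's `k + 1`, so the weight `4·9^(k-1)` reads `4 * 9 ^ k`. -/
theorem deriv_sum_neg_general (n : ℕ) (z : Fin n → ℝ)
    (hz : ∀ i, 0 < z i) (hanti : ∀ i j : Fin n, i < j → z j < z i) (s : Fin n) :
    ∑ k : Fin n, 4 * 9 ^ (k : ℕ) *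
      ((z k) ^ 2 * ((z k) ^ 2 - 3 * (z s) ^ 2) / ((z k) ^ 2 + 3 * (z s) ^ 2) ^ 2) < 0 := by
  have hdom : ∑ k : Fin n with k < s, 4 * (9 : ℝ) ^ (k : ℕ) < 1 / 8 * (4 * 9 ^ (s : ℕ)) := by
    rw [Fin.sum_filter_lt_eq_sum_range s fun i => 4 * (9 : ℝ) ^ i]
    linarith [four_mul_sum_nine_pow_lt s]
  have hself : ratio (z s ^ 2) (z s ^ 2) ≤ -(1 / 8) :=
    (ratio_self (pow_pos (hz s) 2).ne').trans_le (by norm_num)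
  have hgt (k : Fin n) (hsk : s < k) : ratio (z k ^ 2) (z s ^ 2) ≤ 0 :=
    ratio_nonpos (by positivity) (by nlinarith [hanti s k hsk, hz k, sq_nonneg (z s)])
  exact sum_mul_neg_of_dominant (fun k => by positivity) hdom
    (fun k _ => ratio_le_one (by positivity) (by positivity)) hself hgt

/-- The estimate `L'(z_s) - R'(z_s) + R'(z_s) < 0` from the proof of Theorem 1: if
`0 < z_n < z_{n-1} < … < z_1`, then for every `s`,
`Σ_{k=1}^n 4·9^(k-1) · z_k² (z_k² - 3 z_s²) / (z_k² + 3 z_s²)² < 0`.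
(Here index `k : Fin n` corresponds to the paper's index `k + 1`.) -/
theorem deriv_sum_neg (n : ℕ) (hn : 0 < n) (z : Fin n → ℝ)
    (hz : ∀ i, 0 < z i) (hanti : ∀ i j : Fin n, i < j → z j < z i) (s : Fin n) :
    ∑ k : Fin n, 4 * 9 ^ (k : ℕ) *
      ((z k) ^ 2 * ((z k) ^ 2 - 3 * (z s) ^ 2) / ((z k) ^ 2 + 3 * (z s) ^ 2) ^ 2) < 0 :=
  deriv_sum_neg_general n z hz hanti s
end

section
/- Let n be a positive integer, let R ∈ Q_{2n−1} be an odd function with R'(x) > 0 for all x ∈ [−1,1], and let ε ∈ (0, R'(0)/2). For γ > 0 define G_γ(x) = R(x) + 8(R'(0) − 2ε)·γ² x/(γ² + x²) on [−1,1]. Then: (i) G_γ is an odd function belonging to Q_{2n+1}; (ii) G_γ'(0) = 9 R'(0) − 16 ε; (iii) ‖G_γ‖ ≤ ‖R‖ + 4(R'(0) − 2ε)γ; and (iv) there exists γ_0 > 0 such that for all γ ∈ (0, γ_0), G_γ'(x) > 0 for all x ∈ [−1,1]. -/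
/-! The correction term `8(R'(0) - 2ε) γ²x/(γ² + x²)` is an odd rational function of degree `(1, 2)`
with slope `1` at `0` and sup norm `γ/2`, which gives (i)–(iii) directly. Its derivative
`γ²(γ² - x²)/(γ² + x²)²` is everywhere at least `-1/8`, and at least `-γ²/δ²` once `|x| ≥ δ`.
Near `0` the bound `-1/8` is absorbed by `R' > R'(0) - ε`, which holds on a neighbourhood `|x| < δ`
by continuity of `R'`; away from it, `-γ²/δ²` is absorbed by `min R' > 0` once `γ` is small. -/

/-- `QMem m R` means `R` agrees on `[-1,1]` with a rational function `p/q`, where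
`p, q` are real polynomials of degree at most `m` and `q` has no zeros on `[-1,1]`. -/
def QMem (m : ℕ) (R : ℝ → ℝ) : Prop :=
  ∃ p q : Polynomial ℝ, p.natDegree ≤ m ∧ q.natDegree ≤ m ∧
    (∀ x ∈ Set.Icc (-1:ℝ) 1, Polynomial.eval x q ≠ 0) ∧
    (∀ x ∈ Set.Icc (-1:ℝ) 1, R x = Polynomial.eval x p / Polynomial.eval x q)

/-- The uniform (supremum) norm on `C[-1,1]`. -/
noncomputable def supNorm (R : ℝ → ℝ) : ℝ := sSup ((fun x => |R x|) '' Set.Icc (-1:ℝ) 1)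

open Polynomial Set Topology

noncomputable def bump (γ x : ℝ) : ℝ := γ ^ 2 * x / (γ ^ 2 + x ^ 2)

noncomputable def bumpDeriv (γ x : ℝ) : ℝ := γ ^ 2 * (γ ^ 2 - x ^ 2) / (γ ^ 2 + x ^ 2) ^ 2

section Bump

variable {γ : ℝ}

lemma bump_neg (γ x : ℝ) : bump γ (-x) = -bump γ x := by
  simp only [bump, neg_sq]; ring

lemma hasDerivAt_bump (hγ : γ ≠ 0) (x : ℝ) : HasDerivAt (bump γ) (bumpDeriv γ x) x := by
  have hden : γ ^ 2 + x ^ 2 ≠ 0 := by positivity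
  have hnum : HasDerivAt (fun y : ℝ => γ ^ 2 * y) (γ ^ 2) x := by
    simpa using (hasDerivAt_id x).const_mul (γ ^ 2)
  have hden' : HasDerivAt (fun y : ℝ => γ ^ 2 + y ^ 2) (2 * x) x := by
    simpa using (hasDerivAt_pow 2 x).const_add (γ ^ 2)
  exact (hnum.div hden' hden).congr_deriv (by unfold bumpDeriv; ring)

lemma bumpDeriv_zero (hγ : γ ≠ 0) : bumpDeriv γ 0 = 1 := by
  have : γ ^ 2 ≠ 0 := pow_ne_zero 2 hγ
  rw [bumpDeriv]
  field_simp
  ring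

-- AM-GM: `γ²|x| ≤ (γ/2)(γ² + x²)`.
lemma abs_bump_le (hγ : 0 ≤ γ) (x : ℝ) : |bump γ x| ≤ γ / 2 := by
  rcases hγ.eq_or_lt with rfl | hγ
  · simp [bump]
  have hden : 0 < γ ^ 2 + x ^ 2 := by positivity
  rw [bump, abs_div, abs_mul, abs_of_pos hden, abs_of_pos (by positivity), div_le_iff₀ hden]
  nlinarith [mul_nonneg hγ.le (sq_nonneg (γ - |x|)), sq_abs x]

-- The minimum of `(1 - t)/(1 + t)²`, `t = x²/γ²`, is attained at `t = 3`.
lemma neg_inv_eight_le_bumpDeriv (hγ : γ ≠ 0) (x : ℝ) : -(1 / 8) ≤ bumpDeriv γ x := by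
  rw [bumpDeriv, le_div_iff₀ (by positivity)]
  nlinarith [sq_nonneg (x ^ 2 - 3 * γ ^ 2)]

lemma neg_sq_div_sq_le_bumpDeriv {δ x : ℝ} (hδ : 0 < δ) (hx : δ ≤ |x|) :
    -(γ ^ 2 / δ ^ 2) ≤ bumpDeriv γ x := by
  have hx2 : δ ^ 2 ≤ x ^ 2 := by rw [← sq_abs x]; gcongr
  have hden : 0 < (γ ^ 2 + x ^ 2) ^ 2 := by nlinarith [sq_nonneg γ, pow_pos hδ 2]
  rw [bumpDeriv, neg_le, ← neg_div, div_le_div_iff₀ hden (by positivity)]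
  have hnn : 0 ≤ γ ^ 2 * (γ ^ 2 + x ^ 2) := by positivity
  nlinarith [mul_nonneg (mul_nonneg (sq_nonneg γ) (sq_nonneg γ)) (sq_nonneg δ),
    mul_le_mul_of_nonneg_left hx2 hnn, mul_le_mul_of_nonneg_left (le_add_of_nonneg_left
      (sq_nonneg γ) : x ^ 2 ≤ γ ^ 2 + x ^ 2) hnn]

end Bump

lemma pos_add_mul_bumpDeriv_of_small {K : Set ℝ} {s : ℝ → ℝ} {a : ℝ} (hK : IsCompact K)
    (h0 : (0 : ℝ) ∈ K) (hs : ContinuousOn s K) (hpos : ∀ x ∈ K, 0 < s x) (ha : 0 ≤ a)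
    (has : a < 8 * s 0) :
    ∃ γ₀ > 0, ∀ γ : ℝ, 0 < γ → γ < γ₀ → ∀ x ∈ K, 0 < s x + a * bumpDeriv γ x := by
  obtain ⟨x₀, hx₀, hmin⟩ := hK.exists_isMinOn ⟨0, h0⟩ hs
  have hm : 0 < s x₀ := hpos x₀ hx₀
  have hnear : ∀ᶠ x in 𝓝[K] 0, a / 8 < s x :=
    (hs 0 h0).eventually_const_lt (by linarith)
  obtain ⟨δ, hδ, hδK⟩ := Metric.mem_nhdsWithin_iff.mp hnear
  refine ⟨min 1 (δ ^ 2 * s x₀ / (a + 1)), lt_min one_pos (by positivity), ?_⟩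
  intro γ hγ hγ₀ x hx
  have hγ1 : γ < 1 := hγ₀.trans_le (min_le_left _ _)
  have hγ2 : γ * (a + 1) < δ ^ 2 * s x₀ :=
    (lt_div_iff₀ (by linarith)).mp (hγ₀.trans_le (min_le_right _ _))
  by_cases hxδ : |x| < δ
  · -- near `0`, `s > a/8` beats the global lower bound `-1/8` of `bumpDeriv`
    have hsx : a / 8 < s x := hδK ⟨by simpa [Real.dist_eq] using hxδ, hx⟩
    nlinarith [neg_inv_eight_le_bumpDeriv hγ.ne' x]
  · -- away from `0`, `bumpDeriv ≥ -γ²/δ²` is negligible against `min s`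
    have hfar := neg_sq_div_sq_le_bumpDeriv (γ := γ) hδ (not_lt.mp hxδ)
    have hsmall : a * (γ ^ 2 / δ ^ 2) < s x₀ := by
      have hγsq : γ ^ 2 ≤ γ := by nlinarith
      rw [mul_div_assoc', div_lt_iff₀ (by positivity)]
      nlinarith [mul_le_mul_of_nonneg_left hγsq ha]
    linarith [isMinOn_iff.mp hmin x hx, mul_le_mul_of_nonneg_left hfar ha]

lemma QMem.mono {m m' : ℕ} {R : ℝ → ℝ} (h : QMem m R) (hm : m ≤ m') : QMem m' R := by
  obtain ⟨p, q, hp, hq, hq0, hR⟩ := h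
  exact ⟨p, q, hp.trans hm, hq.trans hm, hq0, hR⟩

lemma QMem.add_mul_bump {m : ℕ} {R : ℝ → ℝ} (h : QMem m R) (a : ℝ) {γ : ℝ} (hγ : γ ≠ 0) :
    QMem (m + 2) (fun x => R x + a * bump γ x) := by
  obtain ⟨p, q, hp, hq, hq0, hR⟩ := h
  have hden : (C (γ ^ 2) + X ^ 2 : ℝ[X]).natDegree ≤ 2 :=
    (natDegree_add_le _ _).trans (by simp)
  have hlin : (C (a * γ ^ 2) * X : ℝ[X]).natDegree ≤ 1 :=
    (natDegree_C_mul_le _ _).trans natDegree_X_le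
  refine ⟨p * (C (γ ^ 2) + X ^ 2) + C (a * γ ^ 2) * X * q, q * (C (γ ^ 2) + X ^ 2),
    ?_, ?_, fun x hx => ?_, fun x hx => ?_⟩
  · refine (natDegree_add_le _ _).trans (max_le ?_ ?_)
    · exact natDegree_mul_le.trans (by omega)
    · exact natDegree_mul_le.trans (by omega)
  · exact natDegree_mul_le.trans (by omega)
  · simp only [eval_mul, eval_add, eval_C, eval_pow, eval_X]
    exact mul_ne_zero (hq0 x hx) (by positivity)
  · have hqx := hq0 x hx
    have hden : γ ^ 2 + x ^ 2 ≠ 0 := by positivity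
    simp only [hR x hx, bump, eval_mul, eval_add, eval_C, eval_pow, eval_X]
    field_simp

lemma QMem.contDiffOn {m : ℕ} {R : ℝ → ℝ} (h : QMem m R) (k : WithTop ℕ∞) :
    ContDiffOn ℝ k R (Icc (-1) 1) := by
  obtain ⟨p, q, -, -, hq0, hR⟩ := h
  have hpoly (f : ℝ[X]) : ContDiff ℝ k fun x => f.eval x := by
    simpa using f.contDiff_aeval (R := ℝ) (𝕜 := ℝ) k
  exact ((hpoly p).contDiffOn.div (hpoly q).contDiffOn hq0).congr hR

lemma abs_le_supNorm {R : ℝ → ℝ} (hR : ContinuousOn R (Icc (-1) 1)) {x : ℝ}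
    (hx : x ∈ Icc (-1 : ℝ) 1) : |R x| ≤ supNorm R :=
  le_csSup (isCompact_Icc.image_of_continuousOn hR.abs).bddAbove ⟨x, hx, rfl⟩

lemma supNorm_le {f : ℝ → ℝ} {C : ℝ} (h : ∀ x ∈ Icc (-1 : ℝ) 1, |f x| ≤ C) : supNorm f ≤ C :=
  csSup_le ((nonempty_Icc.mpr (by norm_num)).image _) (by rintro _ ⟨x, hx, rfl⟩; exact h x hx)

lemma derivWithin_add_mul_bump {R : ℝ → ℝ} {s : Set ℝ} {x : ℝ}
    (hR : DifferentiableWithinAt ℝ R s x) (hs : UniqueDiffWithinAt ℝ s x) (a : ℝ) {γ : ℝ}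
    (hγ : γ ≠ 0) :
    derivWithin (fun y => R y + a * bump γ y) s x = derivWithin R s x + a * bumpDeriv γ x :=
  (hR.hasDerivWithinAt.add (((hasDerivAt_bump hγ x).const_mul a).hasDerivWithinAt)).derivWithin hs

/-- Properties of the auxiliary function
`G_γ(x) = R(x) + 8(R'(0) - 2ε)·γ²x/(γ² + x²)` from the proof of Theorem 2:
(i) for every `γ > 0`, `G_γ` is odd on `[-1,1]` and belongs to `Q_{2n+1}`;
(ii) `G_γ'(0) = 9 R'(0) - 16 ε`;
(iii) `‖G_γ‖ ≤ ‖R‖ + 4(R'(0) - 2ε)γ`;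
(iv) for all sufficiently small `γ > 0`, `G_γ' > 0` on `[-1,1]`. -/
theorem G_gamma_properties (n : ℕ) (hn : 0 < n) (R : ℝ → ℝ)
    (hQ : QMem (2 * n - 1) R)
    (hodd : ∀ x ∈ Set.Icc (-1:ℝ) 1, R (-x) = - R x)
    (hpos : ∀ x ∈ Set.Icc (-1:ℝ) 1, 0 < derivWithin R (Set.Icc (-1:ℝ) 1) x)
    (ε : ℝ) (hε : 0 < ε) (hε2 : ε < derivWithin R (Set.Icc (-1:ℝ) 1) 0 / 2)
    (G : ℝ → ℝ → ℝ)
    (hG : ∀ γ x, G γ x =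
      R x + 8 * (derivWithin R (Set.Icc (-1:ℝ) 1) 0 - 2 * ε) * (γ ^ 2 * x / (γ ^ 2 + x ^ 2))) :
    (∀ γ : ℝ, 0 < γ →
      (∀ x ∈ Set.Icc (-1:ℝ) 1, G γ (-x) = - G γ x) ∧
      QMem (2 * n + 1) (G γ) ∧
      derivWithin (G γ) (Set.Icc (-1:ℝ) 1) 0 =
        9 * derivWithin R (Set.Icc (-1:ℝ) 1) 0 - 16 * ε ∧
      supNorm (G γ) ≤ supNorm R + 4 * (derivWithin R (Set.Icc (-1:ℝ) 1) 0 - 2 * ε) * γ) ∧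
    ∃ γ₀ > 0, ∀ γ : ℝ, 0 < γ → γ < γ₀ →
      ∀ x ∈ Set.Icc (-1:ℝ) 1, 0 < derivWithin (G γ) (Set.Icc (-1:ℝ) 1) x := by
  set I := Icc (-1 : ℝ) 1
  set c := derivWithin R I 0 - 2 * ε
  have hc : 0 < c := by linarith
  have hGeq (γ : ℝ) : G γ = fun x => R x + 8 * c * bump γ x := funext (hG γ)
  have hR : ContDiffOn ℝ 1 R I := hQ.contDiffOn 1
  have hI : UniqueDiffOn ℝ I := uniqueDiffOn_Icc (by norm_num)
  have h0 : (0 : ℝ) ∈ I := by norm_num [I]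
  have hderiv {γ : ℝ} (hγ : γ ≠ 0) {x : ℝ} (hx : x ∈ I) :
      derivWithin (G γ) I x = derivWithin R I x + 8 * c * bumpDeriv γ x := by
    rw [hGeq]
    exact derivWithin_add_mul_bump (hR.differentiableOn one_ne_zero x hx) (hI x hx) _ hγ
  refine ⟨fun γ hγ => ⟨fun x hx => ?_, ?_, ?_, ?_⟩, ?_⟩
  · simp only [hGeq, hodd x hx, bump_neg]
    ring
  · rw [hGeq]
    exact (hQ.add_mul_bump _ hγ.ne').mono (by omega)
  · rw [hderiv hγ.ne' h0, bumpDeriv_zero hγ.ne']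
    ring
  · refine supNorm_le fun x hx => ?_
    calc |G γ x| = |R x + 8 * c * bump γ x| := by rw [hGeq]
      _ ≤ |R x| + |8 * c * bump γ x| := abs_add_le _ _
      _ = |R x| + 8 * c * |bump γ x| := by rw [abs_mul, abs_of_pos (by positivity : 0 < 8 * c)]
      _ ≤ supNorm R + 8 * c * (γ / 2) := by
          gcongr
          · exact abs_le_supNorm hR.continuousOn hx
          · exact abs_bump_le hγ.le x
      _ = supNorm R + 4 * c * γ := by ring
  · obtain ⟨γ₀, hγ₀, hsmall⟩ := pos_add_mul_bumpDeriv_of_small (a := 8 * c) isCompact_Icc h0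
      (hR.continuousOn_derivWithin hI le_rfl) hpos (by linarith) (by linarith)
    exact ⟨γ₀, hγ₀, fun γ hγ hγγ₀ x hx => hderiv hγ.ne' hx ▸ hsmall γ hγ hγγ₀ x hx⟩
end
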